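/- Let (R,m) be a Noetherian local ring of dimension d, x_1,…,x_d a system of parameters, and 1 ≤ s ≤ d−1. Then b(R)^{2^{s-1}} ⊆ b(R/Q_s^n) for all n ≥ 1, where Q_s = (x_1,…,x_s) and b(−) denotes the Schenzel ideal. -/

import Mathlib

/-- `x` is a system of parameters of the local ring `R`. -/
def IsSOP (R : Type*) [CommRing R] [IsLocalRing R] {d : ℕ} (x : Fin d → R) : Prop :=
  (∀ i, x i ∈ IsLocalRing.maximalIdeal R) ∧
    (Ideal.span (Set.range x)).radical = IsLocalRing.maximalIdeal R

/-- `Q_s = (x_1, …, x_s)`. -/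
def Qup {R : Type*} [CommRing R] {d : ℕ} (x : Fin d → R) (s : ℕ) : Ideal R :=
  Ideal.span (x '' {i | (i : ℕ) < s})

/-- The Schenzel ideal `b(R)`. -/
noncomputable def bIdeal (R : Type*) [CommRing R] [IsLocalRing R] (d : ℕ) : Ideal R :=
  ⨅ (x : Fin d → R) (_ : IsSOP R x) (s : Fin d),
    Submodule.colon (Qup x (s : ℕ))
      (Submodule.colon (Qup x (s : ℕ)) (Ideal.span {x s}))

/-!
Lift a system of parameters `y` of `R/Q_s^n` and put `x_1, …, x_s` in front of it: this gives a
system of parameters `z` of `R`, and the colon ideals defining `b(R/Q_s^n)` pull back to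
`P : (P : z_j)` with `P = Q_s^n + Z`, `Z = (z_i)_{i ∈ F}`. For `s = 1`, `P` is generated by part
of the system of parameters `x_1^n, z_2, …, z_d`, so after a permutation `b(R)` kills
`P : (P : z_j)` by its very definition. For the step `Q_{s+1} = Q_s + (g)`, the inductive
hypothesis for the systems of parameters with `g` replaced by `g^i` puts `b^{2^{s-1}} (P : z_j)`
into `Q_s^{n+1-i} + (g^i) + Z` for every `i`, and shows that `b^{2^{s-1}}` kills the differences of
consecutive `g`-coefficients modulo `Q_s^{n-i} + Z`; a descending induction on `i` then shows that
a second factor `b^{2^{s-1}}` moves everything into `Q_{s+1}^n + Z`.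
-/

open IsLocalRing

section SystemOfParameters

variable {R : Type*} [CommRing R] [IsLocalRing R] {d : ℕ}

theorem IsSOP.of_maximalIdeal_le_radical {z : Fin d → R} (hz : ∀ i, z i ∈ maximalIdeal R)
    (h : maximalIdeal R ≤ (Ideal.span (Set.range z)).radical) : IsSOP R z := by
  refine ⟨hz, le_antisymm ?_ h⟩
  rw [← (maximalIdeal.isMaximal R).isPrime.radical]
  exact Ideal.radical_mono (Ideal.span_le.mpr (Set.range_subset_iff.mpr hz))

theorem IsSOP.comp_perm {z : Fin d → R} (hz : IsSOP R z) (σ : Equiv.Perm (Fin d)) :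
    IsSOP R (z ∘ σ) :=
  ⟨fun i => hz.1 (σ i), by rw [Set.range_comp, σ.range_eq_univ, Set.image_univ]; exact hz.2⟩

theorem IsSOP.update_pow {z : Fin d → R} (hz : IsSOP R z) (i : Fin d) {k : ℕ} (hk : k ≠ 0) :
    IsSOP R (Function.update z i (z i ^ k)) := by
  have hmem : ∀ l, Function.update z i (z i ^ k) l ∈ maximalIdeal R := by
    intro l
    rcases eq_or_ne l i with rfl | hl
    · simpa using Ideal.pow_mem_of_mem _ (hz.1 l) k (Nat.pos_of_ne_zero hk)
    · simpa [hl] using hz.1 l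
  refine IsSOP.of_maximalIdeal_le_radical hmem (hz.2 ▸ ?_)
  refine Ideal.radical_le_radical_iff.mpr
    (Ideal.span_le.mpr (Set.range_subset_iff.mpr fun l => ?_))
  rcases eq_or_ne l i with rfl | hl
  · exact ⟨k, Ideal.subset_span ⟨l, by simp⟩⟩
  · exact Ideal.le_radical (Ideal.subset_span ⟨l, by simp [hl]⟩)

end SystemOfParameters

theorem Fin.exists_perm_image_lt_eq {d : ℕ} (U : Set (Fin d)) {j : Fin d} (hj : j ∉ U) :
    ∃ (σ : Equiv.Perm (Fin d)) (c : Fin d), σ '' {i | (i : ℕ) < c} = U ∧ σ c = j := by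
  classical
  have hc : Fintype.card U < d := by
    simpa using Fintype.card_subtype_lt (p := (· ∈ U)) hj
  let e : {i : Fin d // (i : ℕ) < Fintype.card U} ≃ U :=
    Fintype.equivOfCardEq (by rw [Fintype.card_fin_lt_of_le hc.le])
  let c : Fin d := ⟨Fintype.card U, hc⟩
  let τ := e.extendSubtype
  have hτU : τ '' {i | (i : ℕ) < c} = U := by
    ext u
    refine ⟨?_, fun hu => ?_⟩
    · rintro ⟨i, hi, rfl⟩
      exact e.extendSubtype_mem i hi
    · set i := e.symm ⟨u, hu⟩
      refine ⟨i, i.2, ?_⟩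
      rw [e.extendSubtype_apply_of_mem _ i.2, Subtype.coe_eta, Equiv.apply_symm_apply]
  have hτc : τ c ∉ U := e.extendSubtype_not_mem c (lt_irrefl _)
  refine ⟨τ.trans (Equiv.swap (τ c) j), c, ?_, by simp⟩
  rw [Equiv.coe_trans, Set.image_comp, hτU]
  refine (Set.image_congr fun u hu => ?_).trans (Set.image_id U)
  exact Equiv.swap_apply_of_ne_of_ne (ne_of_mem_of_not_mem hu hτc) (ne_of_mem_of_not_mem hu hj)

namespace Ideal

variable {R : Type*} [CommRing R]

theorem mem_colon_colon_span_singleton {P : Ideal R} {a γ : R} :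
    γ ∈ P.colon (P.colon (span {a})) ↔ ∀ r, r * a ∈ P → γ * r ∈ P := by
  rw [Submodule.mem_colon]
  simp only [SetLike.mem_coe, mem_colon_span_singleton, smul_eq_mul]

theorem comap_colon_colon_span_singleton {S : Type*} [CommRing S] {f : R →+* S}
    (hf : Function.Surjective f) (P : Ideal S) (a : R) :
    (P.colon (P.colon (span {f a}))).comap f =
      (P.comap f).colon ((P.comap f).colon (span {a})) := by
  ext γ
  simp only [mem_comap, mem_colon_colon_span_singleton, hf.forall, ← map_mul]

theorem sup_pow_add_le_pow_succ_sup_pow (I J : Ideal R) (a b : ℕ) :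
    (I ⊔ J) ^ (a + b) ≤ I ^ (a + 1) ⊔ J ^ b := by
  rw [← add_eq_sup, ← add_eq_sup, add_pow, sum_eq_sup]
  refine Finset.sup_le fun k hk => ?_
  by_cases hak : a + 1 ≤ k
  · exact mul_le_left.trans (mul_le_left.trans ((pow_le_pow_right hak).trans le_sup_left))
  · refine mul_le_left.trans (mul_le_right.trans ((pow_le_pow_right ?_).trans le_sup_right))
    omega

theorem mul_mem_sup_span_singleton_pow_sup {B Z : Ideal R} {g β v : R} {n : ℕ} (hn : n ≠ 0)
    (hv : ∀ i, 1 ≤ i → i ≤ n → v ∈ span {g ^ i} ⊔ (B ^ (n + 1 - i) ⊔ Z))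
    (hβ : ∀ i, 1 ≤ i → i < n → ∀ r, r * g ^ i ∈ B ^ (n - i) ⊔ Z →
      β * r ∈ B ^ (n - i) ⊔ Z) :
    β * v ∈ (B ⊔ span {g}) ^ n ⊔ Z := by
  set T := (B ⊔ span {g}) ^ n ⊔ Z
  have hmulT : ∀ i ≤ n, (B ^ (n - i) ⊔ Z) * span {g} ^ i ≤ T := by
    intro i hi
    rw [sup_mul]
    refine sup_le_sup ?_ mul_le_left
    calc B ^ (n - i) * span {g} ^ i
        ≤ (B ⊔ span {g}) ^ (n - i) * (B ⊔ span {g}) ^ i :=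
          mul_mono (pow_right_mono le_sup_left _) (pow_right_mono le_sup_right _)
      _ = (B ⊔ span {g}) ^ n := by rw [← pow_add, Nat.sub_add_cancel hi]
  have hgT : ∀ i ≤ n, ∀ x ∈ B ^ (n - i) ⊔ Z, x * g ^ i ∈ T := fun i hi x hx =>
    hmulT i hi (mul_mem_mul hx (span_singleton_pow g i ▸ mem_span_singleton_self _))
  have key : ∀ i, 1 ≤ i → i ≤ n →
      ∃ r, v - r * g ^ i ∈ B ^ (n + 1 - i) ⊔ Z ∧ β * r * g ^ i ∈ T := by
    intro i hi hin
    induction hin using Nat.decreasingInduction with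
    | self =>
      obtain ⟨r, w, hw, rfl⟩ := mem_span_singleton_sup.mp (hv n hi le_rfl)
      refine ⟨r, by simpa using hw, ?_⟩
      simpa using hgT n le_rfl (β * r) (mem_sup_left (by simp))
    | of_succ i hin ih =>
      obtain ⟨r', hr', hβr'⟩ := ih (by omega)
      obtain ⟨r, w, hw, rfl⟩ := mem_span_singleton_sup.mp (hv i hi hin.le)
      rw [show n + 1 - (i + 1) = n - i by omega] at hr'
      have hdiff : (r - g * r') * g ^ i ∈ B ^ (n - i) ⊔ Z := by
        have heq : (r - g * r') * g ^ i = (r * g ^ i + w - r' * g ^ (i + 1)) - w := by ring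
        rw [heq]
        exact sub_mem hr' (sup_le_sup_right (pow_le_pow_right (by omega)) Z hw)
      refine ⟨r, by simpa using hw, ?_⟩
      have heq : β * r * g ^ i = β * (r - g * r') * g ^ i + β * r' * g ^ (i + 1) := by ring
      rw [heq]
      exact add_mem (hgT i hin.le _ (hβ i hi hin _ hdiff)) hβr'
  obtain ⟨r, hr, hβr⟩ := key 1 le_rfl (Nat.one_le_iff_ne_zero.mpr hn)
  have heq : β * v = β * (v - r * g ^ 1) + β * r * g ^ 1 := by ring
  rw [heq]
  refine add_mem ?_ hβr
  exact sup_le_sup_right (pow_right_mono le_sup_left n) Z (mul_mem_left _ β (by simpa using hr))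

end Ideal

section Qup

variable {R : Type*} [CommRing R] {d : ℕ}

theorem Qup_zero (z : Fin d → R) : Qup z 0 = ⊥ := by
  simp [Qup]

theorem Qup_succ (z : Fin d → R) {m : ℕ} (hm : m < d) :
    Qup z (m + 1) = Qup z m ⊔ Ideal.span {z ⟨m, hm⟩} := by
  have hset : {i : Fin d | (i : ℕ) < m + 1} = insert ⟨m, hm⟩ {i : Fin d | (i : ℕ) < m} := by
    ext i
    simp only [Set.mem_ofPred_eq, Set.mem_insert_iff, Fin.ext_iff]
    omega
  rw [Qup, hset, Set.image_insert_eq, Ideal.span_insert, sup_comm, Qup]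

theorem Qup_update_of_le (z : Fin d → R) {i : Fin d} {m : ℕ} (h : m ≤ i) (a : R) :
    Qup (Function.update z i a) m = Qup z m := by
  refine congrArg Ideal.span (Set.image_congr fun l hl => Function.update_of_ne ?_ a z)
  rintro rfl
  exact absurd hl (not_lt.mpr h)

theorem Set.image_update_of_notMem {α β : Type*} [DecidableEq α] (f : α → β) {s : Set α}
    {i : α} (hi : i ∉ s) (b : β) : Function.update f i b '' s = f '' s :=
  Set.image_congr fun _ hl => Function.update_of_ne (ne_of_mem_of_not_mem hl hi) b f

end Qup

section SchenzelIdeal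

variable {R : Type*} [CommRing R] [IsLocalRing R] {d : ℕ}

theorem bIdeal_le_colon_colon_span_image {z : Fin d → R} (hz : IsSOP R z) {U : Set (Fin d)}
    {j : Fin d} (hj : j ∉ U) :
    bIdeal R d ≤
      (Ideal.span (z '' U)).colon ((Ideal.span (z '' U)).colon (Ideal.span {z j})) := by
  obtain ⟨σ, c, hσU, hσc⟩ := Fin.exists_perm_image_lt_eq U hj
  have hQ : Qup (z ∘ σ) c = Ideal.span (z '' U) := by rw [Qup, Set.image_comp, hσU]
  have h : bIdeal R d ≤
      (Qup (z ∘ σ) c).colon ((Qup (z ∘ σ) c).colon (Ideal.span {(z ∘ σ) c})) :=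
    iInf_le_of_le (z ∘ σ) (iInf_le_of_le (hz.comp_perm σ) (iInf_le _ c))
  rwa [hQ, Function.comp_apply, hσc] at h

theorem bIdeal_pow_le_colon_colon_Qup_pow_sup {m : ℕ} (hm : 1 ≤ m) {z : Fin d → R}
    (hz : IsSOP R z) {n : ℕ} (hn : n ≠ 0) {F : Set (Fin d)} (hF : ∀ i ∈ F, m ≤ (i : ℕ))
    {j : Fin d} (hj : m ≤ (j : ℕ)) (hjF : j ∉ F) :
    bIdeal R d ^ 2 ^ (m - 1) ≤ (Qup z m ^ n ⊔ Ideal.span (z '' F)).colon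
      ((Qup z m ^ n ⊔ Ideal.span (z '' F)).colon (Ideal.span {z j})) := by
  induction m, hm using Nat.le_induction generalizing z n F j with
  | base =>
    let i₀ : Fin d := ⟨0, by omega⟩
    have hi₀F : i₀ ∉ F := fun h => absurd (hF i₀ h) (by simp [i₀])
    have hji₀ : j ≠ i₀ := fun h => absurd hj (by simp [h, i₀])
    have h := bIdeal_le_colon_colon_span_image (hz.update_pow i₀ hn)
      (by simp [hji₀, hjF] : j ∉ insert i₀ F)
    rw [Nat.sub_self, pow_zero, pow_one]
    rwa [Set.image_insert_eq, Ideal.span_insert, Set.image_update_of_notMem _ hi₀F,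
      Function.update_self, Function.update_of_ne hji₀, ← Ideal.span_singleton_pow,
      ← bot_sup_eq (Ideal.span {z i₀}), ← Qup_zero z, ← Qup_succ z] at h
  | succ m hm ih =>
    have hmd : m < d := by omega
    let jm : Fin d := ⟨m, hmd⟩
    have hjmF : jm ∉ F := fun h => absurd (hF jm h) (by simp [jm])
    have hjjm : j ≠ jm := fun h => absurd hj (by simp [h, jm])
    rw [show m + 1 - 1 = m - 1 + 1 by omega, pow_succ, mul_two, pow_add, Ideal.mul_le]
    intro β hβ γ hγ
    rw [Ideal.mem_colon_colon_span_singleton]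
    intro r hr
    rw [mul_assoc, Qup_succ z hmd]
    refine Ideal.mul_mem_sup_span_singleton_pow_sup hn (fun i hi hin => ?_)
      (fun i hi hin r' hr' => ?_)
    · have h := ih (hz.update_pow jm (k := i) (by omega)) (n := n + 1 - i) (by omega)
        (F := insert jm F) (j := j) (by simpa [jm] using fun i hi => Nat.le_of_succ_le (hF i hi))
        (by omega) (by simp [hjjm, hjF])
      rw [Qup_update_of_le z le_rfl, Set.image_insert_eq, Function.update_self,
        Set.image_update_of_notMem _ hjmF, Ideal.span_insert, Function.update_of_ne hjjm,
        sup_left_comm] at h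
      have hpow := Ideal.sup_pow_add_le_pow_succ_sup_pow (Qup z m) (Ideal.span {z jm}) (n - i) i
      rw [Nat.sub_add_cancel hin, show n - i + 1 = n + 1 - i by omega, Ideal.span_singleton_pow,
        ← Qup_succ z hmd] at hpow
      refine Ideal.mem_colon_colon_span_singleton.mp (h hγ) r ?_
      exact sup_le (hpow.trans (sup_le (le_sup_left.trans le_sup_right) le_sup_left))
        (le_sup_right.trans le_sup_right) hr
    · have h := ih (hz.update_pow jm (k := i) (by omega)) (n := n - i) (by omega)
        (F := F) (j := jm) (fun i hi => Nat.le_of_succ_le (hF i hi)) le_rfl hjmF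
      rw [Qup_update_of_le z le_rfl, Set.image_update_of_notMem _ hjmF, Function.update_self] at h
      exact Ideal.mem_colon_colon_span_singleton.mp (h hβ) r' hr'

end SchenzelIdeal

theorem exists_isSOP_lift {R : Type*} [CommRing R] [IsLocalRing R] {d : ℕ} {x : Fin d → R}
    (hx : ∀ i, x i ∈ maximalIdeal R) {s : ℕ} {I : Ideal R} (hI : I ≤ Qup x s)
    [IsLocalRing (R ⧸ I)] {y : Fin (d - s) → R ⧸ I} (hy : IsSOP (R ⧸ I) y) :
    ∃ z : Fin d → R, IsSOP R z ∧ Qup z s = Qup x s ∧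
      ∀ t : Fin (d - s),
        Ideal.Quotient.mk I (z ⟨s + t, Nat.add_lt_of_lt_sub' t.isLt⟩) = y t := by
  let mk := Ideal.Quotient.mk I
  let yl : Fin (d - s) → R := fun t => Function.surjInv Ideal.Quotient.mk_surjective (y t)
  let z : Fin d → R := fun i => if h : (i : ℕ) < s then x i else yl ⟨i - s, by omega⟩
  have hzx : ∀ i : Fin d, (i : ℕ) < s → z i = x i := fun i h => dif_pos h
  have hzy : ∀ t : Fin (d - s), mk (z ⟨s + t, Nat.add_lt_of_lt_sub' t.isLt⟩) = y t := by
    intro t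
    simp only [z, dif_neg (Nat.not_lt.mpr (Nat.le_add_right s t)), Nat.add_sub_cancel_left]
    exact Function.surjInv_eq _ _
  have hQ : Qup z s = Qup x s := congrArg Ideal.span (Set.image_congr hzx)
  have hmax : (maximalIdeal (R ⧸ I)).comap mk = maximalIdeal R :=
    eq_maximalIdeal (Ideal.comap_isMaximal_of_surjective _ Ideal.Quotient.mk_surjective)
  refine ⟨z, IsSOP.of_maximalIdeal_le_radical (fun i => ?_) ?_, hQ, hzy⟩
  · by_cases h : (i : ℕ) < s
    · exact hzx i h ▸ hx i
    · rw [← hmax, Ideal.mem_comap]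
      simpa only [z, dif_neg h, mk, yl, Function.surjInv_eq] using hy.1 _
  have hyz : Ideal.span (Set.range y) ≤ (Ideal.span (Set.range z)).map mk := by
    refine Ideal.span_le.mpr (Set.range_subset_iff.mpr fun t => hzy t ▸ ?_)
    exact Ideal.mem_map_of_mem _ (Ideal.subset_span (Set.mem_range_self _))
  have hIz : I ≤ Ideal.span (Set.range z) :=
    hI.trans (hQ ▸ Ideal.span_mono (Set.image_subset_range _ _))
  calc maximalIdeal R = ((Ideal.span (Set.range y)).radical).comap mk := by rw [hy.2, hmax]
    _ = ((Ideal.span (Set.range y)).comap mk).radical := Ideal.comap_radical _ _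
    _ ≤ (((Ideal.span (Set.range z)).map mk).comap mk).radical :=
        Ideal.radical_mono (Ideal.comap_mono hyz)
    _ = (Ideal.span (Set.range z)).radical := by
        rw [Ideal.comap_map_quotientMk, sup_eq_right.mpr hIz]

theorem stmt15_general {R : Type*} [CommRing R] [IsLocalRing R] {d : ℕ}
    (x : Fin d → R) (hx : IsSOP R x)
    (s : ℕ) (hs : 1 ≤ s) (n : ℕ) (hn : 1 ≤ n)
    [IsLocalRing (R ⧸ Qup x s ^ n)] :
    bIdeal R d ^ 2 ^ (s - 1)
      ≤ Ideal.comap (Ideal.Quotient.mk (Qup x s ^ n))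
          (bIdeal (R ⧸ Qup x s ^ n) (d - s)) := by
  intro β hβ
  simp only [Ideal.mem_comap, bIdeal, Submodule.mem_iInf]
  intro y hy t
  obtain ⟨z, hz, hzx, hzy⟩ := exists_isSOP_lift hx.1 (Ideal.pow_le_self (by omega)) hy
  let emb : Fin (d - s) → Fin d := fun t' => ⟨s + t', Nat.add_lt_of_lt_sub' t'.isLt⟩
  let F : Set (Fin d) := emb '' {t' | (t' : ℕ) < t}
  have hF : ∀ i ∈ F, s ≤ (i : ℕ) := by
    rintro _ ⟨t', -, rfl⟩
    exact Nat.le_add_right s t'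
  have htF : emb t ∉ F := by
    rintro ⟨t', ht', h⟩
    exact (ne_of_lt ht') (by simpa [emb, Fin.ext_iff] using h)
  have hQy : (Qup y t).comap (Ideal.Quotient.mk _) = Qup x s ^ n ⊔ Ideal.span (z '' F) := by
    have himg : Ideal.Quotient.mk _ '' (z '' F) = y '' {t' | (t' : ℕ) < t} := by
      simp only [F, Set.image_image, hzy, emb]
    rw [← Ideal.comap_map_quotientMk, Ideal.map_span, himg]
    rfl
  rw [← Ideal.mem_comap, ← hzy t,
    Ideal.comap_colon_colon_span_singleton Ideal.Quotient.mk_surjective, hQy, ← hzx]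
  exact bIdeal_pow_le_colon_colon_Qup_pow_sup hs hz (by omega) hF (Nat.le_add_right s t) htF hβ

theorem stmt15 {R : Type*} [CommRing R] [IsLocalRing R] [IsNoetherianRing R] {d : ℕ}
    (hd : ringKrullDim R = d) (x : Fin d → R) (hx : IsSOP R x)
    (s : ℕ) (hs : 1 ≤ s) (hsd : s ≤ d - 1) (n : ℕ) (hn : 1 ≤ n)
    [IsLocalRing (R ⧸ Qup x s ^ n)] :
    bIdeal R d ^ 2 ^ (s - 1)
      ≤ Ideal.comap (Ideal.Quotient.mk (Qup x s ^ n))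
          (bIdeal (R ⧸ Qup x s ^ n) (d - s)) :=
  stmt15_general x hx s hs n hn
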